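/- arXiv:2501.00154 — 5 statements merged into one kernel-verified Lean document; each statement's English description precedes it below -/
import Mathlib

section
/- For every integer n ≥ 1, the central binomial coefficient satisfies C(2n, n) ≤ 4^n / √(2n+1). -/
lemma key_cb (n : ℕ) : (2 * n + 1) * (Nat.centralBinom n) ^ 2 ≤ 16 ^ n := by
  induction n with
  | zero => simp [Nat.centralBinom]
  | succ n ih =>
    have h := Nat.succ_mul_centralBinom_succ n
    have hmul : (n + 1) ^ 2 * ((2 * (n + 1) + 1) * (Nat.centralBinom (n + 1)) ^ 2)
        ≤ (n + 1) ^ 2 * 16 ^ (n + 1) := by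
      calc (n + 1) ^ 2 * ((2 * (n + 1) + 1) * (Nat.centralBinom (n + 1)) ^ 2)
          = (2 * n + 3) * ((n + 1) * Nat.centralBinom (n + 1)) ^ 2 := by ring
        _ = (2 * n + 3) * (2 * (2 * n + 1) * Nat.centralBinom n) ^ 2 := by rw [h]
        _ = (4 * (2 * n + 3) * (2 * n + 1)) * ((2 * n + 1) * Nat.centralBinom n ^ 2) := by ring
        _ ≤ (4 * (2 * n + 3) * (2 * n + 1)) * 16 ^ n := Nat.mul_le_mul_left _ ih
        _ ≤ (16 * (n + 1) ^ 2) * 16 ^ n := Nat.mul_le_mul_right _ (by nlinarith)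
        _ = (n + 1) ^ 2 * 16 ^ (n + 1) := by ring
    exact Nat.le_of_mul_le_mul_left hmul (by positivity)

theorem erdos_central_binomial (n : ℕ) (hn : 1 ≤ n) :
    ((2 * n).choose n : ℝ) ≤ 4 ^ n / Real.sqrt (2 * n + 1) := by
  have hpos : (0:ℝ) < Real.sqrt (2 * n + 1) := Real.sqrt_pos.2 (by positivity)
  rw [le_div_iff₀ hpos]
  have key : ((2 * n + 1 : ℕ) : ℝ) * ((2 * n).choose n : ℝ) ^ 2 ≤ (16 : ℝ) ^ n := by
    have := key_cb n
    rw [Nat.centralBinom] at this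
    exact_mod_cast this
  have hC : (0:ℝ) ≤ ((2 * n).choose n : ℝ) := by positivity
  have hsq : (((2 * n).choose n : ℝ) * Real.sqrt (2 * n + 1)) ^ 2 ≤ ((4:ℝ) ^ n) ^ 2 := by
    rw [mul_pow, Real.sq_sqrt (by positivity : (0:ℝ) ≤ 2 * (n:ℝ) + 1)]
    calc ((2 * n).choose n : ℝ) ^ 2 * (2 * (n:ℝ) + 1)
        = ((2 * n + 1 : ℕ) : ℝ) * ((2 * n).choose n : ℝ) ^ 2 := by push_cast; ring
      _ ≤ (16 : ℝ) ^ n := key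
      _ = ((4:ℝ) ^ n) ^ 2 := by rw [← pow_mul, mul_comm n 2, pow_mul]; norm_num
  exact (pow_le_pow_iff_left₀ (by positivity) (by positivity) two_ne_zero).1 hsq
end

section
/- Let d ≥ 1, let w ∈ ℚ^d and t ∈ ℚ define a linear classifier L(x) = 1 iff w·x ≥ t on {0,1}^d, let x ∈ {0,1}^d, and define the score of feature i as s_i = w_i·(2x_i − 1)·(2L(x) − 1). Let y be a partial instance with y ⊆ x (i.e., y agrees with x on its defined coordinates), let i be a coordinate undefined in y with s_i ≥ 0, and let y ⊕ i be y with coordinate i set to x_i. Then, under the uniform distribution over completions, Pr_{z ∈ comp(y ⊕ i)}[L(z) = L(x)] ≥ Pr_{z ∈ comp(y)}[L(z) = L(x)]. -/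
/-! Split the completions of `y` by the value of `z i`. Negating bit `i` is a bijection from the
completions with `z i = !x i` onto those with `z i = x i`; as `score w t x i ≥ 0`, it moves `w · z`
towards the side of `t` on which `x` lies, so it sends completions classified like `x` to
completions classified like `x`. Hence the agreement rate on the half with `z i = x i` is at least
the average over both halves. -/

/-- Output of the linear classifier with weights `w` and threshold `t` on `z ∈ {0,1}^d`. -/
def linOut {d : ℕ} (w : Fin d → ℚ) (t : ℚ) (z : Fin d → Bool) : Bool :=
  decide (t ≤ ∑ i, w i * (if z i then 1 else 0))

/-- Completions of a partial instance `y ∈ {0,1,⊥}^d`. -/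
def completions {d : ℕ} (y : Fin d → Option Bool) : Finset (Fin d → Bool) :=
  Finset.univ.filter (fun z => ∀ i, ∀ b, y i = some b → z i = b)

/-- `Pr_{z ~ U(y)}[L(z) = L(x)]`, uniform over the completions of `y`. -/
def prSame {d : ℕ} (w : Fin d → ℚ) (t : ℚ) (x : Fin d → Bool)
    (y : Fin d → Option Bool) : ℚ :=
  (((completions y).filter (fun z => linOut w t z = linOut w t x)).card : ℚ)
    / ((completions y).card : ℚ)

/-- Score of feature `i`: `w_i (2x_i - 1)(2L(x) - 1)`. -/
def score {d : ℕ} (w : Fin d → ℚ) (t : ℚ) (x : Fin d → Bool) (i : Fin d) : ℚ :=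
  w i * (2 * (if x i then 1 else 0) - 1) * (2 * (if linOut w t x then 1 else 0) - 1)

/-- `y ⊆ x`: the partial instance `y` agrees with `x` on its defined coordinates. -/
def subsetOf {d : ℕ} (y : Fin d → Option Bool) (x : Fin d → Bool) : Prop :=
  ∀ i, ∀ b, y i = some b → x i = b

def flipAt {ι : Type*} [DecidableEq ι] (i : ι) (z : ι → Bool) : ι → Bool :=
  Function.update z i (!z i)

section flipAt

variable {ι : Type*} [DecidableEq ι]

@[simp]
lemma flipAt_apply_self (i : ι) (z : ι → Bool) : flipAt i z i = !z i := by
  simp [flipAt]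

lemma flipAt_apply_of_ne {i j : ι} (h : j ≠ i) (z : ι → Bool) : flipAt i z j = z j :=
  Function.update_of_ne h _ _

lemma flipAt_involutive (i : ι) : Function.Involutive (flipAt i) := by
  intro z
  funext j
  rcases eq_or_ne j i with rfl | hj
  · simp
  · simp only [flipAt_apply_of_ne hj]

lemma sum_mul_ite_flipAt {R : Type*} [CommRing R] [Fintype ι] (w : ι → R) (i : ι)
    (z : ι → Bool) :
    ∑ j, w j * (if flipAt i z j then 1 else 0)
      = ∑ j, w j * (if z j then 1 else 0) + w i * (1 - 2 * if z i then 1 else 0) := by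
  rw [← sub_eq_iff_eq_add', ← Finset.sum_sub_distrib, Fintype.sum_eq_single i]
  · rw [flipAt_apply_self]
    cases z i <;> simp
    ring
  · intro j hj
    rw [flipAt_apply_of_ne hj, sub_self]

end flipAt

lemma linOut_flipAt_eq {d : ℕ} {w : Fin d → ℚ} {t : ℚ} {x z : Fin d → Bool} {i : Fin d}
    (hs : 0 ≤ score w t x i) (hzi : z i = !x i) (hz : linOut w t z = linOut w t x) :
    linOut w t (flipAt i z) = linOut w t x := by
  have hsum : ∑ j, w j * (if flipAt i z j then 1 else 0)
      = ∑ j, w j * (if z j then 1 else 0) + w i * (2 * (if x i then 1 else 0) - 1) := by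
    rw [sum_mul_ite_flipAt, hzi]
    cases x i <;> norm_num
  cases hL : linOut w t x
  · have hδ : w i * (2 * (if x i then 1 else 0) - 1) ≤ 0 := by
      simpa [score, hL] using hs
    rw [hL, linOut, decide_eq_false_iff_not] at hz
    rw [linOut, decide_eq_false_iff_not, hsum]
    linarith
  · have hδ : 0 ≤ w i * (2 * (if x i then 1 else 0) - 1) := by
      simpa [score, hL] using hs
    rw [hL, linOut, decide_eq_true_iff] at hz
    rw [linOut, decide_eq_true_iff, hsum]
    linarith

lemma mem_completions {d : ℕ} {y : Fin d → Option Bool} {z : Fin d → Bool} :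
    z ∈ completions y ↔ ∀ j b, y j = some b → z j = b := by
  simp [completions]

section completions

variable {d : ℕ} {y : Fin d → Option Bool} {i : Fin d}

lemma mem_completions_update_of_eq_none (hi : y i = none) (c : Bool) {z : Fin d → Bool} :
    z ∈ completions (Function.update y i (some c)) ↔ z ∈ completions y ∧ z i = c := by
  simp only [mem_completions]
  constructor
  · intro h
    refine ⟨fun j b hjb => h j b ?_, h i c (by simp)⟩
    rwa [Function.update_of_ne (by rintro rfl; simp [hi] at hjb)]
  · rintro ⟨h, rfl⟩ j b hjb
    rcases eq_or_ne j i with rfl | hj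
    · simpa using hjb
    · exact h j b (by rwa [Function.update_of_ne hj] at hjb)

lemma completions_eq_union_update (hi : y i = none) (c : Bool) :
    completions y = completions (Function.update y i (some c))
      ∪ completions (Function.update y i (some !c)) := by
  ext z
  simp only [Finset.mem_union, mem_completions_update_of_eq_none hi]
  cases z i <;> cases c <;> simp

lemma disjoint_completions_update (c : Bool) :
    Disjoint (completions (Function.update y i (some c)))
      (completions (Function.update y i (some !c))) := by
  rw [Finset.disjoint_left]
  intro z hc hnc
  have := (mem_completions.1 hc i c (by simp)).symm.trans (mem_completions.1 hnc i (!c) (by simp))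
  cases c <;> simp at this

lemma flipAt_mem_completions_update (hi : y i = none) {c : Bool} {z : Fin d → Bool}
    (hz : z ∈ completions (Function.update y i (some c))) :
    flipAt i z ∈ completions (Function.update y i (some !c)) := by
  rw [mem_completions_update_of_eq_none hi] at hz ⊢
  refine ⟨mem_completions.2 fun j b hjb => ?_, by simp [hz.2]⟩
  rw [flipAt_apply_of_ne (by rintro rfl; simp [hi] at hjb)]
  exact mem_completions.1 hz.1 j b hjb

lemma card_completions_update_not (hi : y i = none) (c : Bool) :
    (completions (Function.update y i (some !c))).card
      = (completions (Function.update y i (some c))).card :=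
  Finset.card_nbij' (flipAt i) (flipAt i)
    (fun _ hz => by simpa using flipAt_mem_completions_update hi hz)
    (fun _ hz => flipAt_mem_completions_update hi hz)
    (fun z _ => flipAt_involutive i z) (fun z _ => flipAt_involutive i z)

end completions

lemma add_div_add_self_le {K : Type*} [Field K] [LinearOrder K] [IsStrictOrderedRing K]
    {a b n : K} (hba : b ≤ a) (hn : 0 ≤ n) : (a + b) / (n + n) ≤ a / n :=
  calc (a + b) / (n + n) ≤ (a + a) / (n + n) := by gcongr
    _ = a / n := by rw [← two_mul, ← two_mul, mul_div_mul_left _ _ two_ne_zero]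

lemma card_filter_div_card_union_le {K α : Type*} [Field K] [LinearOrder K]
    [IsStrictOrderedRing K] [DecidableEq α] {A B : Finset α} (P : α → Prop) [DecidablePred P] (hAB : Disjoint A B) (hcard : B.card = A.card) {f : α → α}
    (hf : Set.InjOn f (B.filter P)) (hmaps : ∀ z ∈ B, P z → f z ∈ A ∧ P (f z)) :
    (((A ∪ B).filter P).card : K) / (A ∪ B).card ≤ ((A.filter P).card : K) / A.card := by
  have hPcard : (B.filter P).card ≤ (A.filter P).card :=
    Finset.card_le_card_of_injOn f
      (fun z hz => by
        rw [Finset.mem_coe, Finset.mem_filter] at hz ⊢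
        exact hmaps z hz.1 hz.2)
      hf
  rw [Finset.filter_union, Finset.card_union_of_disjoint (Finset.disjoint_filter_filter hAB),
    Finset.card_union_of_disjoint hAB, hcard]
  push_cast
  exact add_div_add_self_le (by exact_mod_cast hPcard) (Nat.cast_nonneg _)

theorem add_nonneg_score_feature_general (d : ℕ) (w : Fin d → ℚ) (t : ℚ)
    (x : Fin d → Bool) (y : Fin d → Option Bool)
    (i : Fin d) (hi : y i = none) (hs : 0 ≤ score w t x i) :
    prSame w t x y ≤ prSame w t x (Function.update y i (some (x i))) := by
  rw [prSame, prSame, completions_eq_union_update hi (x i)]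
  refine card_filter_div_card_union_le _ (disjoint_completions_update (x i))
    (card_completions_update_not hi (x i)) (flipAt_involutive i).injective.injOn ?_
  intro z hz hLz
  exact ⟨by simpa using flipAt_mem_completions_update hi hz,
    linOut_flipAt_eq hs ((mem_completions_update_of_eq_none hi _).1 hz).2 hLz⟩

theorem add_nonneg_score_feature (d : ℕ) (hd : 1 ≤ d) (w : Fin d → ℚ) (t : ℚ)
    (x : Fin d → Bool) (y : Fin d → Option Bool) (hy : subsetOf y x)
    (i : Fin d) (hi : y i = none) (hs : 0 ≤ score w t x i) :
    prSame w t x y ≤ prSame w t x (Function.update y i (some (x i))) :=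
  add_nonneg_score_feature_general d w t x y i hi hs
end

section
/- Let L be a linear classifier on {0,1}^d with weights w and threshold t, let x ∈ {0,1}^d, and order the features so that the scores s_i = w_i·(2x_i − 1)·(2L(x) − 1) satisfy s_1 ≥ s_2 ≥ ... ≥ s_d. For 0 ≤ k ≤ d let y^(k) ⊆ x be the partial instance that agrees with x on coordinates 1..k and is undefined elsewhere. Then for all 0 ≤ k ≤ d−1, Pr_{z ∈ comp(y^(k+1))}[L(z) = L(x)] ≥ Pr_{z ∈ comp(y^(k))}[L(z) = L(x)] under the uniform distribution over completions, and Pr_{z ∈ comp(y^(d))}[L(z) = L(x)] = 1. -/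
/-- `topk x k` is the partial instance defined (agreeing with `x`) exactly on the
first `k` coordinates. -/
def topk {d : ℕ} (x : Fin d → Bool) (k : ℕ) : Fin d → Option Bool :=
  fun i => if (i : ℕ) < k then some (x i) else none

/-!
Let `σ = 2 L(x) - 1`, so that `score i = σ w_i (2 x_i - 1)` is `σ` times the change of the
weighted sum when coordinate `i` is switched from `¬ x_i` to `x_i`. Going from `y^(k)` to
`y^(k+1)` fixes coordinate `i = k`; flipping it is an involution of `comp(y^(k))` exchanging
`comp(y^(k+1))` with its complement. If `score i ≥ 0`, flipping towards `x_i` keeps the label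
equal to `L(x)`, so the complement contains at most as many hits as `comp(y^(k+1))` and the
proportion of hits can only grow. If `score i ≤ 0`, every still-free coordinate has
nonpositive score by sortedness, so moving away from `x` on them only pushes the weighted sum
further to `L(x)`'s side: all completions of `y^(k)` are hits and both probabilities are `1`.
-/

open Finset Function

variable {d : ℕ}

def weightSum (w : Fin d → ℚ) (z : Fin d → Bool) : ℚ :=
  ∑ i, w i * (if z i then 1 else 0)

def labelSign (w : Fin d → ℚ) (t : ℚ) (x : Fin d → Bool) : ℚ :=
  2 * (if linOut w t x then 1 else 0) - 1

lemma linOut_eq_decide (w : Fin d → ℚ) (t : ℚ) (z : Fin d → Bool) :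
    linOut w t z = decide (t ≤ weightSum w z) := rfl

lemma linOut_eq_of_labelSign_mul_sub_nonneg {w : Fin d → ℚ} {t : ℚ} {x z z' : Fin d → Bool}
    (hz : linOut w t z = linOut w t x)
    (h : 0 ≤ labelSign w t x * (weightSum w z' - weightSum w z)) :
    linOut w t z' = linOut w t x := by
  unfold labelSign at h
  rw [linOut_eq_decide] at hz ⊢
  cases hx : linOut w t x <;> rw [hx] at hz h <;> norm_num at h
  · simp only [decide_eq_false_iff_not, not_le] at hz ⊢
    linarith
  · simp only [decide_eq_true_iff] at hz ⊢
    linarith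

lemma labelSign_mul_weight_mul_sub (w : Fin d → ℚ) (t : ℚ) (x : Fin d → Bool) (i : Fin d)
    (b : Bool) :
    labelSign w t x * (w i * ((if x i then 1 else 0) - (if b then 1 else 0))) =
      if b = x i then 0 else score w t x i := by
  unfold labelSign score
  cases b <;> cases x i <;> simp <;> ring

lemma weightSum_update_sub (w : Fin d → ℚ) (z : Fin d → Bool) (i : Fin d) (b : Bool) :
    weightSum w (update z i b) - weightSum w z =
      w i * ((if b then 1 else 0) - (if z i then 1 else 0)) := by
  unfold weightSum
  rw [← sum_sub_distrib, sum_eq_single i (fun j _ hj => by simp [update_of_ne hj]) (by simp)]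
  simp [mul_sub]

lemma weightSum_sub (w : Fin d → ℚ) (z x : Fin d → Bool) :
    weightSum w z - weightSum w x =
      ∑ i, w i * ((if z i then 1 else 0) - (if x i then 1 else 0)) := by
  simp only [weightSum, ← sum_sub_distrib, mul_sub]

lemma linOut_update_eq_of_score_nonneg {w : Fin d → ℚ} {t : ℚ} {x z : Fin d → Bool} {i : Fin d}
    (hs : 0 ≤ score w t x i) (hz : linOut w t z = linOut w t x) :
    linOut w t (update z i (x i)) = linOut w t x := by
  refine linOut_eq_of_labelSign_mul_sub_nonneg hz ?_
  rw [weightSum_update_sub, labelSign_mul_weight_mul_sub]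
  split_ifs
  exacts [le_rfl, hs]

lemma linOut_eq_of_score_nonpos {w : Fin d → ℚ} {t : ℚ} {x z : Fin d → Bool}
    (h : ∀ i, z i ≠ x i → score w t x i ≤ 0) :
    linOut w t z = linOut w t x := by
  refine linOut_eq_of_labelSign_mul_sub_nonneg rfl ?_
  rw [weightSum_sub, mul_sum]
  refine sum_nonneg fun i _ => ?_
  rw [← neg_sub, mul_neg, mul_neg, labelSign_mul_weight_mul_sub, neg_nonneg]
  split_ifs with hi
  exacts [le_rfl, h i hi]

lemma mem_completions_topk {x z : Fin d → Bool} {k : ℕ} :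
    z ∈ completions (topk x k) ↔ ∀ i : Fin d, (i : ℕ) < k → z i = x i := by
  rw [completions, mem_filter_univ]
  simp only [topk]
  refine ⟨fun h i hi => h i (x i) (by simp [hi]), fun h i b hb => ?_⟩
  split_ifs at hb with hi
  rw [h i hi, Option.some_inj.mp hb]

lemma completions_topk_succ (x : Fin d → Bool) (i : Fin d) :
    completions (topk x (i + 1)) = (completions (topk x i)).filter (fun z => z i = x i) := by
  ext z
  simp only [mem_filter, mem_completions_topk]
  refine ⟨fun h => ⟨fun j hj => h j (by omega), h i (by omega)⟩, fun ⟨h, hi⟩ j hj => ?_⟩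
  rcases Nat.lt_succ_iff_lt_or_eq.mp hj with hj | hj
  · exact h j hj
  · rwa [Fin.ext hj]

lemma completions_topk_of_le (x : Fin d → Bool) {k : ℕ} (hk : d ≤ k) :
    completions (topk x k) = {x} := by
  ext z
  rw [mem_completions_topk, mem_singleton]
  exact ⟨fun h => funext fun i => h i (by omega), fun h i _ => h ▸ rfl⟩

lemma update_mem_completions_topk {x z : Fin d → Bool} {k : ℕ} {i : Fin d} (hi : k ≤ i)
    (hz : z ∈ completions (topk x k)) (b : Bool) :
    update z i b ∈ completions (topk x k) := by
  rw [mem_completions_topk] at hz ⊢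
  intro j hj
  rw [update_of_ne (by rintro rfl; omega)]
  exact hz j hj

lemma linOut_eq_of_mem_completions_topk {w : Fin d → ℚ} {t : ℚ} {x z : Fin d → Bool}
    (hsorted : Antitone (score w t x)) {i : Fin d} (hs : score w t x i ≤ 0)
    (hz : z ∈ completions (topk x i)) :
    linOut w t z = linOut w t x := by
  refine linOut_eq_of_score_nonpos fun j hj => (hsorted ?_).trans hs
  by_contra! hji
  exact hj (mem_completions_topk.mp hz j hji)

lemma prSame_topk_of_le (w : Fin d → ℚ) (t : ℚ) (x : Fin d → Bool) {k : ℕ} (hk : d ≤ k) :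
    prSame w t x (topk x k) = 1 := by
  simp [prSame, completions_topk_of_le x hk, filter_singleton]

lemma card_filter_div_card_le_of_involutive {α : Type*} (C : Finset α) (p q : α → Prop)
    [DecidablePred p] [DecidablePred q] (f : α → α) (hf : Involutive f)
    (hC : ∀ z ∈ C, f z ∈ C) (hp : ∀ z ∈ C, p (f z) ↔ ¬ p z)
    (hq : ∀ z ∈ C, ¬ p z → q z → q (f z)) :
    (#(C.filter q) : ℚ) / #C ≤ #((C.filter p).filter q) / #(C.filter p) := by
  have hcard : #(C.filter (¬ p ·)) = #(C.filter p) := by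
    refine card_nbij' f f (fun z hz => ?_) (fun z hz => ?_) (fun z _ => hf z) (fun z _ => hf z)
    all_goals simp only [mem_coe, mem_filter] at hz ⊢
    · exact ⟨hC z hz.1, (hp z hz.1).mpr hz.2⟩
    · exact ⟨hC z hz.1, (hp z hz.1).not.mpr (not_not.mpr hz.2)⟩
  have hhits : #((C.filter (¬ p ·)).filter q) ≤ #((C.filter p).filter q) := by
    refine card_le_card_of_injOn f (fun z hz => ?_) hf.injective.injOn
    simp only [mem_coe, mem_filter] at hz ⊢
    exact ⟨⟨hC z hz.1.1, (hp z hz.1.1).mpr hz.1.2⟩, hq z hz.1.1 hz.1.2 hz.2⟩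
  rw [← card_filter_add_card_filter_not (s := C) p, ← card_filter_add_card_filter_not p,
    filter_comm q p, filter_comm q (¬ p ·), hcard]
  push_cast
  calc _ ≤ ((#((C.filter p).filter q) : ℚ) + #((C.filter p).filter q)) /
        (#(C.filter p) + #(C.filter p)) := by gcongr
    _ = _ := by rw [← two_mul, ← two_mul, mul_div_mul_left _ _ two_ne_zero]

lemma prSame_topk_le_succ {w : Fin d → ℚ} {t : ℚ} {x : Fin d → Bool}
    (hsorted : Antitone (score w t x)) (i : Fin d) :
    prSame w t x (topk x i) ≤ prSame w t x (topk x (i + 1)) := by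
  unfold prSame
  rw [completions_topk_succ]
  refine card_filter_div_card_le_of_involutive (completions (topk x i)) (fun z => z i = x i)
    (fun z => linOut w t z = linOut w t x) (fun z => update z i (!z i)) ?_ ?_ ?_ ?_
  · intro z
    simp [update_idem]
  · exact fun z hz => update_mem_completions_topk le_rfl hz _
  · intro z _
    rw [update_self]
    exact Bool.not_eq_iff
  · intro z hz hzi hq
    rcases le_total 0 (score w t x i) with hs | hs
    · rw [show (!z i) = x i from Bool.not_eq_iff.mpr hzi]
      exact linOut_update_eq_of_score_nonneg hs hq
    · exact linOut_eq_of_mem_completions_topk hsorted hs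
        (update_mem_completions_topk le_rfl hz _)

theorem greedy_monotone_general (d : ℕ) (w : Fin d → ℚ) (t : ℚ) (x : Fin d → Bool)
    (hsorted : ∀ i j : Fin d, i ≤ j → score w t x j ≤ score w t x i) :
    (∀ k : ℕ, k ≤ d - 1 →
      prSame w t x (topk x k) ≤ prSame w t x (topk x (k + 1))) ∧
    prSame w t x (topk x d) = 1 := by
  refine ⟨fun k _ => ?_, prSame_topk_of_le w t x le_rfl⟩
  rcases lt_or_ge k d with hk | hk
  · exact prSame_topk_le_succ (fun i j hij => hsorted i j hij) ⟨k, hk⟩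
  · rw [prSame_topk_of_le w t x hk, prSame_topk_of_le w t x (by omega)]

theorem greedy_monotone (d : ℕ) (hd : 1 ≤ d) (w : Fin d → ℚ) (t : ℚ) (x : Fin d → Bool)
    (hsorted : ∀ i j : Fin d, i ≤ j → score w t x j ≤ score w t x i) :
    (∀ k : ℕ, k ≤ d - 1 →
      prSame w t x (topk x k) ≤ prSame w t x (topk x (k + 1))) ∧
    prSame w t x (topk x d) = 1 :=
  greedy_monotone_general d w t x hsorted
end

section
/- Let L be a linear classifier on {0,1}^d with weights w and threshold t, let x ∈ {0,1}^d with scores s_1 ≥ ... ≥ s_d (features sorted decreasingly by score s_i = w_i·(2x_i−1)·(2L(x)−1)), and let y^(k) be the partial instance agreeing with x exactly on the first k coordinates. Then for every k, Pr_{z ∈ comp(y^(k))}[L(z) = L(x)] = max over all partial instances y ⊆ x with exactly k defined coordinates of Pr_{z ∈ comp(y)}[L(z) = L(x)], probabilities taken uniformly over completions. -/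
/-- Number of defined coordinates of a partial instance. -/
def definedCount {d : ℕ} (y : Fin d → Option Bool) : ℕ :=
  (Finset.univ.filter (fun i => (y i).isSome)).card

/-!
A completion of a partial instance `y ⊆ x` is `x` with a set `F` of free coordinates of `y`
flipped. Flipping `F` lowers the margin of the classifier, signed by `L(x)`, by
`∑ i ∈ F, score i`, so agreement with `L(x)` is a threshold condition on that sum.
If `y` has `k` defined coordinates, its free coordinates can be matched injectively into those
of `topk x k`, the last `d - k`, without ever increasing the score: fix the common ones and send
the remaining ones, all `< k`, to the remaining ones `≥ k`. Pushing flip sets along the matching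
sends agreeing completions of `y` injectively to agreeing completions of `topk x k`, and both
partial instances have `2 ^ (d - k)` completions.
-/

open Finset

section Combinatorics

variable {ι : Type*}

lemma exists_injOn_mapsTo_le_of_card_le [LinearOrder ι] {s t : Finset ι} (hcard : #s ≤ #t)
    (hlt : ∀ a ∈ s \ t, ∀ b ∈ t \ s, a < b) :
    ∃ σ : ι → ι, Set.InjOn σ s ∧ Set.MapsTo σ s t ∧ ∀ a ∈ s, a ≤ σ a := by
  obtain ⟨e⟩ : Nonempty ((s \ t : Finset ι) ↪ (t \ s : Finset ι)) :=
    Function.Embedding.nonempty_of_card_le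
      (by simpa only [Fintype.card_coe] using card_sdiff_le_card_sdiff_iff.mpr hcard)
  let σ : ι → ι := fun a => if h : a ∈ s \ t then e ⟨a, h⟩ else a
  have hσ_out {a} (h : a ∈ s \ t) : σ a ∈ t \ s := by simp only [σ, dif_pos h]; exact (e _).2
  have hσ_in {a} (h : a ∉ s \ t) : σ a = a := dif_neg h
  refine ⟨σ, fun a ha a' ha' heq => ?_, fun a ha => ?_, fun a ha => ?_⟩
  · by_cases h : a ∈ s \ t <;> by_cases h' : a' ∈ s \ t
    · simp only [σ, dif_pos h, dif_pos h'] at heq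
      simpa using e.injective (Subtype.ext heq)
    · have := hσ_out h; rw [heq, hσ_in h'] at this; simp_all
    · have := hσ_out h'; rw [← heq, hσ_in h] at this; simp_all
    · rwa [hσ_in h, hσ_in h'] at heq
  · by_cases h : a ∈ s \ t
    · exact (mem_sdiff.mp (hσ_out h)).1
    · rw [hσ_in h]; simp_all
  · by_cases h : a ∈ s \ t
    · exact (hlt a h _ (hσ_out h)).le
    · exact (hσ_in h).ge

lemma card_filter_powerset_le_of_injOn [DecidableEq ι] {M : Type*} [AddCommMonoid M]
    [PartialOrder M] [IsOrderedAddMonoid M] {f : ι → M} {s t : Finset ι} {σ : ι → ι}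
    (hinj : Set.InjOn σ s) (hmaps : Set.MapsTo σ s t) (hle : ∀ i ∈ s, f (σ i) ≤ f i)
    (P : Finset ι → Prop) [DecidablePred P]
    (hP : ∀ F G : Finset ι, ∑ i ∈ F, f i ≤ ∑ i ∈ G, f i → P G → P F) :
    #(s.powerset.filter P) ≤ #(t.powerset.filter P) := by
  refine card_le_card_of_injOn (image σ) (fun F hF => ?_) (fun F hF G hG heq => ?_)
  · simp only [coe_filter, mem_powerset, Set.mem_ofPred_eq] at hF ⊢
    refine ⟨image_subset_iff.mpr fun i hi => hmaps (hF.1 hi), hP _ _ ?_ hF.2⟩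
    rw [sum_image (hinj.mono (by simpa using hF.1))]
    exact sum_le_sum fun i hi => hle i (hF.1 hi)
  · simp only [coe_filter, mem_powerset, Set.mem_ofPred_eq] at hF hG
    exact coe_inj.mp <| (hinj.image_eq_image_iff (by simpa using hF.1) (by simpa using hG.1)).mp
      (by rw [← coe_image, ← coe_image, heq])

end Combinatorics

section PartialInstances

variable {d : ℕ}

def freeCoords (y : Fin d → Option Bool) : Finset (Fin d) :=
  univ.filter fun i => y i = none

def flipCoords (x : Fin d → Bool) (F : Finset (Fin d)) : Fin d → Bool :=
  fun i => if i ∈ F then !x i else x i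

lemma flipCoords_injective (x : Fin d → Bool) : Function.Injective (flipCoords x) := by
  intro F G h
  ext i
  have := congrFun h i
  by_cases hF : i ∈ F <;> by_cases hG : i ∈ G <;> simp_all [flipCoords]

lemma completions_eq_image_flipCoords {y : Fin d → Option Bool} {x : Fin d → Bool}
    (hy : subsetOf y x) : completions y = (freeCoords y).powerset.image (flipCoords x) := by
  ext z
  simp only [completions, mem_filter, mem_univ, true_and, mem_image, mem_powerset]
  constructor
  · intro hz
    refine ⟨univ.filter fun i => z i ≠ x i, fun i hi => ?_, funext fun i => ?_⟩
    · simp only [freeCoords, mem_filter, mem_univ, true_and] at hi ⊢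
      by_contra hyi
      obtain ⟨b, hb⟩ := Option.ne_none_iff_exists'.mp hyi
      exact hi ((hz i b hb).trans (hy i b hb).symm)
    · simp only [flipCoords, mem_filter, mem_univ, true_and]
      split_ifs with h
      · exact (Bool.eq_not_iff.mpr h).symm
      · exact (not_not.mp h).symm
  · rintro ⟨F, hF, rfl⟩ i b hb
    have hi : i ∉ F := fun hi => by simpa [freeCoords, hb] using hF hi
    simp only [flipCoords, if_neg hi, hy i b hb]

lemma card_freeCoords (y : Fin d → Option Bool) : #(freeCoords y) = d - definedCount y := by
  have := card_filter_add_card_filter_not (s := univ) fun i => (y i).isSome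
  simp only [card_univ, Fintype.card_fin, Option.not_isSome_iff_eq_none] at this
  rw [definedCount, freeCoords]
  omega

lemma topk_subsetOf (x : Fin d → Bool) (k : ℕ) : subsetOf (topk x k) x := by
  intro i b h
  unfold topk at h
  split_ifs at h
  exact Option.some_inj.mp h

lemma definedCount_topk (x : Fin d → Bool) {k : ℕ} (hk : k ≤ d) :
    definedCount (topk x k) = k := by
  have h (i : Fin d) : (topk x k i).isSome ↔ (i : ℕ) < k := by
    by_cases hi : (i : ℕ) < k <;> simp [topk, hi]
  rw [definedCount, filter_congr fun i _ => h i, Fin.card_filter_val_lt, min_eq_right hk]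

lemma mem_freeCoords_topk {x : Fin d → Bool} {k : ℕ} {i : Fin d} :
    i ∈ freeCoords (topk x k) ↔ k ≤ (i : ℕ) := by
  simp [freeCoords, topk]

end PartialInstances

section LinearClassifier

variable {d : ℕ} {w : Fin d → ℚ} {t : ℚ} {x : Fin d → Bool}

lemma sum_mul_flipCoords (F : Finset (Fin d)) :
    ∑ i, w i * (if flipCoords x F i then 1 else 0) =
      ∑ i, w i * (if x i then 1 else 0) - ∑ i ∈ F, w i * (2 * (if x i then 1 else 0) - 1) := by
  rw [← Fintype.sum_ite_mem F, ← sum_sub_distrib]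
  refine sum_congr rfl fun i _ => ?_
  by_cases hi : i ∈ F <;> cases hx : x i <;> norm_num [flipCoords, hi, hx]

lemma linOut_flipCoords_of_sum_score_le {F G : Finset (Fin d)}
    (hFG : ∑ i ∈ F, score w t x i ≤ ∑ i ∈ G, score w t x i)
    (hG : linOut w t (flipCoords x G) = linOut w t x) :
    linOut w t (flipCoords x F) = linOut w t x := by
  simp only [score, ← sum_mul] at hFG
  cases hx : linOut w t x <;> simp only [hx, Bool.false_eq_true, if_true, if_false] at hG hFG <;>
    simp only [linOut, decide_eq_false_iff_not, decide_eq_true_eq, not_le,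
      sum_mul_flipCoords] at hG hx ⊢ <;> linarith

lemma prSame_eq_card_filter_powerset_div {y : Fin d → Option Bool} (hy : subsetOf y x) :
    prSame w t x y = #((freeCoords y).powerset.filter fun F =>
      linOut w t (flipCoords x F) = linOut w t x) / 2 ^ #(freeCoords y) := by
  rw [prSame, completions_eq_image_flipCoords hy, filter_image,
    card_image_of_injective _ (flipCoords_injective x),
    card_image_of_injective _ (flipCoords_injective x), card_powerset]
  push_cast
  rfl

end LinearClassifier

theorem topk_maximizes_general (d : ℕ) (w : Fin d → ℚ) (t : ℚ) (x : Fin d → Bool)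
    (hsorted : ∀ i j : Fin d, i ≤ j → score w t x j ≤ score w t x i)
    (k : ℕ) (hk : k ≤ d) :
    IsGreatest
      {p : ℚ | ∃ y : Fin d → Option Bool,
        subsetOf y x ∧ definedCount y = k ∧ p = prSame w t x y}
      (prSame w t x (topk x k)) := by
  refine ⟨⟨topk x k, topk_subsetOf x k, definedCount_topk x hk, rfl⟩, ?_⟩
  rintro _ ⟨y, hy, hcount, rfl⟩
  have hcard : #(freeCoords y) = #(freeCoords (topk x k)) := by
    rw [card_freeCoords, card_freeCoords, hcount, definedCount_topk x hk]
  have hlt : ∀ a ∈ freeCoords y \ freeCoords (topk x k),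
      ∀ b ∈ freeCoords (topk x k) \ freeCoords y, a < b := by
    intro a ha b hb
    rw [mem_sdiff, mem_freeCoords_topk] at ha hb
    exact Fin.lt_def.mpr (by omega)
  obtain ⟨σ, hinj, hmaps, hle⟩ := exists_injOn_mapsTo_le_of_card_le hcard.le hlt
  have hagree := card_filter_powerset_le_of_injOn hinj hmaps
    (fun i hi => hsorted i (σ i) (hle i hi)) _ fun F G => linOut_flipCoords_of_sum_score_le
  rw [prSame_eq_card_filter_powerset_div hy,
    prSame_eq_card_filter_powerset_div (topk_subsetOf x k), hcard]
  exact div_le_div_of_nonneg_right (Nat.cast_le.mpr hagree) (by positivity)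

theorem topk_maximizes (d : ℕ) (hd : 1 ≤ d) (w : Fin d → ℚ) (t : ℚ) (x : Fin d → Bool)
    (hsorted : ∀ i j : Fin d, i ≤ j → score w t x j ≤ score w t x i)
    (k : ℕ) (hk : k ≤ d) :
    IsGreatest
      {p : ℚ | ∃ y : Fin d → Option Bool,
        subsetOf y x ∧ definedCount y = k ∧ p = prSame w t x y}
      (prSame w t x (topk x k)) :=
  topk_maximizes_general d w t x hsorted k hk
end

section
/- Let P(n,k) = 2^{-n}·Σ_{j=k}^{n} C(n,j) and suppose 0 ≤ k ≤ m ≤ n with m ≤ n − k. Then P(n−k, m−k) ≤ P(n, m) + k/√(n−k). -/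
/-- `Ptail n k` is the probability that a Binomial(n, 1/2) random variable is at least `k`. -/
noncomputable def Ptail (n k : ℕ) : ℝ :=
  (1 / 2 ^ n) * ∑ j ∈ Finset.Icc k n, (n.choose j : ℝ)

lemma cb_sq (r : ℕ) : (Nat.centralBinom r)^2 * (2*r+1) ≤ 16^r := by
  induction r with
  | zero => simp [Nat.centralBinom]
  | succ r ih =>
    have h2 : ((r+1) * Nat.centralBinom (r+1))^2 = (2*(2*r+1))^2 * (Nat.centralBinom r)^2 := by
      rw [Nat.succ_mul_centralBinom_succ]; ring
    have key : (r+1)^2 * ((Nat.centralBinom (r+1))^2 * (2*(r+1)+1)) ≤ (r+1)^2 * 16^(r+1) := by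
      calc (r+1)^2 * ((Nat.centralBinom (r+1))^2 * (2*(r+1)+1))
          = ((r+1) * Nat.centralBinom (r+1))^2 * (2*r+3) := by ring
        _ = (4*(2*r+1)*(2*r+3)) * ((Nat.centralBinom r)^2 * (2*r+1)) := by rw [h2]; ring
        _ ≤ (4*(2*r+1)*(2*r+3)) * 16^r := Nat.mul_le_mul_left _ ih
        _ ≤ (16*(r+1)^2) * 16^r := Nat.mul_le_mul_right _ (by nlinarith)
        _ = (r+1)^2 * 16^(r+1) := by ring
    exact Nat.le_of_mul_le_mul_left key (by positivity)

lemma choose_sq (n k : ℕ) : (n.choose k)^2 * n ≤ 4^n := by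
  have h1 : n.choose k ≤ n.choose (n/2) := Nat.choose_le_middle k n
  have h1' : (n.choose k)^2 * n ≤ (n.choose (n/2))^2 * n :=
    Nat.mul_le_mul_right _ (Nat.pow_le_pow_left h1 2)
  refine h1'.trans ?_
  rcases Nat.even_or_odd n with ⟨r, hr⟩ | ⟨r, hr⟩
  · subst hr
    have : (r+r)/2 = r := by omega
    rw [this]
    have hc : (r+r).choose r = Nat.centralBinom r := by
      rw [Nat.centralBinom_eq_two_mul_choose]; ring_nf
    rw [hc]
    calc (Nat.centralBinom r)^2 * (r+r) ≤ (Nat.centralBinom r)^2 * (2*r+1) :=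
          Nat.mul_le_mul_left _ (by omega)
      _ ≤ 16^r := cb_sq r
      _ ≤ 4^(r+r) := by
          rw [show (16:ℕ) = 4^2 by norm_num, ← pow_mul]
          exact Nat.pow_le_pow_right (by norm_num) (by omega)
  · subst hr
    have : (2*r+1)/2 = r := by omega
    rw [this]
    have h2 : (2*r+1).choose r ≤ 2 * Nat.centralBinom r := by
      rcases Nat.eq_zero_or_pos r with rfl | hr0
      · simp [Nat.centralBinom]
      · obtain ⟨s, rfl⟩ : ∃ s, r = s+1 := ⟨r-1, by omega⟩
        have hp : (2*(s+1)+1).choose (s+1) = (2*(s+1)).choose s + (2*(s+1)).choose (s+1) :=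
          Nat.choose_succ_succ (2*(s+1)) s
        have hle : (2*(s+1)).choose s ≤ (2*(s+1)).choose (s+1) := by
          have := Nat.choose_le_middle s (2*(s+1))
          rwa [show 2*(s+1)/2 = s+1 by omega] at this
        rw [Nat.centralBinom_eq_two_mul_choose]; omega
    calc ((2*r+1).choose r)^2 * (2*r+1) ≤ (2*Nat.centralBinom r)^2 * (2*r+1) :=
          Nat.mul_le_mul_right _ (Nat.pow_le_pow_left h2 2)
      _ = 4 * ((Nat.centralBinom r)^2 * (2*r+1)) := by ring
      _ ≤ 4 * 16^r := Nat.mul_le_mul_left _ (cb_sq r)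
      _ = 4^(2*r+1) := by
          rw [show (16:ℕ) = 4^2 by norm_num, ← pow_mul, pow_succ]; ring

lemma choose_le_real (n k : ℕ) : (n.choose k : ℝ) * Real.sqrt n ≤ 2^n := by
  have h : ((n.choose k : ℝ) * Real.sqrt n)^2 ≤ ((2:ℝ)^n)^2 := by
    have hc : ((n.choose k)^2 * n : ℕ) ≤ ((4:ℕ)^n) := choose_sq n k
    have hs := Real.sq_sqrt (by positivity : (0:ℝ) ≤ (n:ℝ))
    calc ((n.choose k : ℝ) * Real.sqrt n)^2 = (n.choose k : ℝ)^2 * (Real.sqrt n)^2 := by ring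
      _ = (n.choose k : ℝ)^2 * n := by rw [hs]
      _ ≤ (4:ℝ)^n := by exact_mod_cast hc
      _ = ((2:ℝ)^n)^2 := by
          rw [show (4:ℝ) = 2^2 by norm_num, ← pow_mul, ← pow_mul, Nat.mul_comm]
  have h1 : (0:ℝ) ≤ (n.choose k : ℝ) * Real.sqrt n := by positivity
  nlinarith [pow_pos (by norm_num : (0:ℝ) < 2) n]

lemma sum_pascal (n m : ℕ) (h : m ≤ n) :
    ∑ j ∈ Finset.Icc (m+1) (n+1), ((n+1).choose j : ℝ)
      = 2 * ∑ j ∈ Finset.Icc m n, (n.choose j : ℝ) - (n.choose m : ℝ) := by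
  have e1 : ∑ j ∈ Finset.Icc (m+1) (n+1), ((n+1).choose j : ℝ)
      = ∑ j ∈ Finset.Icc m n, ((n+1).choose (j+1) : ℝ) := by
    rw [← Finset.map_add_right_Icc m n 1, Finset.sum_map]
    rfl
  rw [e1]
  have e2 : ∀ j ∈ Finset.Icc m n, ((n+1).choose (j+1) : ℝ)
      = (n.choose j : ℝ) + (n.choose (j+1) : ℝ) := by
    intro j _
    rw [Nat.choose_succ_succ]
    push_cast; ring
  rw [Finset.sum_congr rfl e2, Finset.sum_add_distrib]
  have e3 : ∑ j ∈ Finset.Icc m n, (n.choose (j+1) : ℝ)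
      = ∑ j ∈ Finset.Icc (m+1) (n+1), (n.choose j : ℝ) := by
    rw [← Finset.map_add_right_Icc m n 1, Finset.sum_map]
    rfl
  have e4 : ∑ j ∈ Finset.Icc (m+1) (n+1), (n.choose j : ℝ)
      = ∑ j ∈ Finset.Icc (m+1) n, (n.choose j : ℝ) := by
    rw [Finset.sum_Icc_succ_top (by omega), Nat.choose_succ_self]
    simp
  have e5 : ∑ j ∈ Finset.Icc m n, (n.choose j : ℝ)
      = (n.choose m : ℝ) + ∑ j ∈ Finset.Icc (m+1) n, (n.choose j : ℝ) := by
    rw [Finset.Icc_eq_cons_Ioc h, Finset.sum_cons, ← Finset.Icc_add_one_left_eq_Ioc]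
  rw [e3, e4]
  linarith [e5]

lemma ptail_step (n m : ℕ) (h : m ≤ n) :
    Ptail (n+1) (m+1) = Ptail n m - (1 / 2^(n+1)) * ((n.choose m : ℝ)) := by
  unfold Ptail
  rw [sum_pascal n m h]
  field_simp
  ring

lemma binomial_tail_aux (k : ℕ) : ∀ n m : ℕ, k ≤ m → m ≤ n → m ≤ n - k →
    Ptail (n - k) (m - k) ≤ Ptail n m + (k : ℝ) / Real.sqrt ((n - k : ℕ) : ℝ) := by
  induction k with
  | zero => intro n m _ _ _; simp
  | succ k ih =>
    intro n m hkm hmn hmnk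
    have hkn : k + 1 ≤ n := le_trans hkm hmn
    set a := n - (k+1) with hadef
    set b := m - (k+1) with hbdef
    have ha : n - k = a + 1 := by omega
    have hb : m - k = b + 1 := by omega
    have hba : b ≤ a := by omega
    have ha1 : 1 ≤ a := by omega
    have ihs := ih n m (by omega) hmn (by omega)
    rw [ha, hb] at ihs
    have hstep := ptail_step a b hba
    have hsa : (0:ℝ) < Real.sqrt a := Real.sqrt_pos.mpr (by exact_mod_cast ha1)
    have hch : (1 / 2^(a+1)) * ((a.choose b : ℝ)) ≤ 1 / Real.sqrt a := by
      have h1 := choose_le_real a b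
      have h2 : (0:ℝ) < 2^(a+1) := by positivity
      rw [div_mul_eq_mul_div, div_le_div_iff₀ h2 hsa]
      calc 1 * (a.choose b : ℝ) * Real.sqrt a = (a.choose b : ℝ) * Real.sqrt a := by ring
        _ ≤ 2^a := h1
        _ ≤ 2^(a+1) := by
            have : (2:ℝ)^a ≤ 2^(a+1) := by
              apply pow_le_pow_right₀ (by norm_num); omega
            simpa using this
        _ = 1 * 2^(a+1) := by ring
    have hmono : (k : ℝ) / Real.sqrt (((a:ℕ)+1 : ℕ) : ℝ) ≤ (k : ℝ) / Real.sqrt a := by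
      apply div_le_div_of_nonneg_left (by positivity) hsa
      apply Real.sqrt_le_sqrt; push_cast; linarith
    have hPab : Ptail a b = Ptail (a+1) (b+1) + (1 / 2^(a+1)) * ((a.choose b : ℝ)) := by
      rw [hstep]; ring
    calc Ptail a b = Ptail (a+1) (b+1) + (1 / 2^(a+1)) * ((a.choose b : ℝ)) := hPab
      _ ≤ (Ptail n m + (k : ℝ) / Real.sqrt (((a:ℕ)+1 : ℕ) : ℝ)) + 1 / Real.sqrt a := by
          apply add_le_add _ hch
          exact ihs
      _ ≤ (Ptail n m + (k : ℝ) / Real.sqrt a) + 1 / Real.sqrt a := by linarith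
      _ = Ptail n m + ((k:ℝ)+1) / Real.sqrt a := by field_simp; ring
      _ = Ptail n m + ((k+1 : ℕ) : ℝ) / Real.sqrt ((a : ℕ) : ℝ) := by push_cast; ring

theorem binomial_tail_shift_bound (n m k : ℕ) (hkm : k ≤ m) (hmn : m ≤ n)
    (hmnk : m ≤ n - k) :
    Ptail (n - k) (m - k) ≤ Ptail n m + (k : ℝ) / Real.sqrt ((n - k : ℕ) : ℝ) := by
  exact binomial_tail_aux k n m hkm hmn hmnk
end
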